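/- arXiv:2505.09621 — 3 statements merged into one kernel-verified Lean document; each statement's English description precedes it below -/
import Mathlib

section
/- Let N ≥ 1, let (c_i)_{0≤i≤N+1} ∈ LO^N(ℝ²) and let (θ_j)_{1≤j≤N} ∈ (ℝ/2πℤ)^N. Then the pair ((c_i),(θ_j)) is an N-reflexive polygonal chain (i.e., for every 1 ≤ j ≤ N the dot products (c_{j+1} − c_j)·n(θ_j) and (c_{j−1} − c_j)·n(θ_j) are both nonzero and of the same sign) if and only if for every 1 ≤ j ≤ N one has θ_j ∈ (A_L^+)_j ∪ (A_L^−)_j, where L = (c_i). -/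
open Real Set
open scoped Classical

noncomputable section

abbrev Pt : Type := EuclideanSpace ℝ (Fin 2)

noncomputable def pt (x y : ℝ) : Pt := (WithLp.equiv 2 (Fin 2 → ℝ)).symm ![x, y]

def dot (u v : Pt) : ℝ := u 0 * v 0 + u 1 * v 1

noncomputable def nvec (θ : Real.Angle) : Pt := pt (-θ.sin) θ.cos

noncomputable def dirvec (θ : Real.Angle) : Pt := pt θ.cos θ.sin

noncomputable def angleOf (v : Pt) : Real.Angle := ((Complex.arg ⟨v 0, v 1⟩ : ℝ) : Real.Angle)

/-- The space of `N`-polygonal chains `(ℝ²)^{N+2}`. -/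
abbrev Chain (N : ℕ) := Fin (N + 2) → Pt

/-- Access the `i`-th point of a chain (junk value `0` out of range). -/
def cg {N : ℕ} (c : Chain N) (i : ℕ) : Pt := if h : i < N + 2 then c ⟨i, h⟩ else 0

/-- The `j`-th ray of a chain: `R_0 = (c_0,c_1]`, `R_j = [c_j, c_{j+1}]`. -/
def ray {N : ℕ} (c : Chain N) (j : ℕ) : Set Pt :=
  if j = 0 then segment ℝ (cg c 0) (cg c 1) \ {cg c 0}
  else segment ℝ (cg c j) (cg c (j + 1))

def Obscured {N : ℕ} (c : Chain N) : Prop :=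
  cg c 0 = cg c 1 ∨
    ∃ j k : ℕ, j ≤ N ∧ 1 ≤ k ∧ k ≤ N + 1 ∧ k ≠ j ∧ k ≠ j + 1 ∧ cg c k ∈ ray c j

def Grazing {N : ℕ} (c : Chain N) : Prop :=
  ∃ i : ℕ, 1 ≤ i ∧ i ≤ N ∧ cg c i ∈ openSegment ℝ (cg c (i - 1)) (cg c (i + 1))

/-- Obscuration-free, non-grazing chains. -/
def LO (N : ℕ) : Set (Chain N) := {c | ¬Obscured c ∧ ¬Grazing c}

/-- Access the angle of the `j`-th mirror, `1 ≤ j ≤ N` (junk out of range). -/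
def θg {N : ℕ} (θ : Fin N → Real.Angle) (j : ℕ) : Real.Angle :=
  if h : j - 1 < N then θ ⟨j - 1, h⟩ else 0

/-- Reflexion condition: at each mirror both adjacent dot products with `n(θ_j)`
are nonzero and of the same sign. -/
def IsReflexive {N : ℕ} (c : Chain N) (θ : Fin N → Real.Angle) : Prop :=
  ∀ j : ℕ, 1 ≤ j → j ≤ N →
    0 < dot (cg c (j + 1) - cg c j) (nvec (θg θ j)) *
        dot (cg c (j - 1) - cg c j) (nvec (θg θ j))

abbrev RChain (N : ℕ) := Chain N × (Fin N → Real.Angle)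

/-- The space of reflexive polygonal chains. -/
def LR (N : ℕ) : Set (RChain N) := {L | L.1 ∈ LO N ∧ IsReflexive L.1 L.2}

/-- The open arc `α + ε·(0,π)` in `ℝ/2πℤ`. -/
def arc (α : Real.Angle) (ε : ℤ) : Set Real.Angle :=
  {β | ∃ s : ℝ, 0 < s ∧ s < π ∧ β = α + (((ε : ℝ) * s : ℝ) : Real.Angle)}

/-- Positive orientation set of the `j`-th mirror. -/
def APlus {N : ℕ} (c : Chain N) (j : ℕ) : Set Real.Angle :=
  arc (angleOf (cg c j - cg c (j - 1))) ((-1) ^ j) ∩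
    arc (angleOf (cg c j - cg c (j + 1))) ((-1) ^ j)

/-- Negative orientation set of the `j`-th mirror. -/
def AMinus {N : ℕ} (c : Chain N) (j : ℕ) : Set Real.Angle :=
  arc (angleOf (cg c j - cg c (j - 1))) ((-1) ^ (j + 1)) ∩
    arc (angleOf (cg c j - cg c (j + 1))) ((-1) ^ (j + 1))

/-- The characteristic: index `j : Fin N` corresponds to the `(j+1)`-st mirror. -/
noncomputable def Car {N : ℕ} (L : RChain N) : Fin N → ℤ :=
  fun j => if θg L.2 (j.1 + 1) ∈ APlus L.1 (j.1 + 1) then 1 else -1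

abbrev Beam (N : ℕ) := Chain N × Chain N

def IsPrimaryBeam {N : ℕ} (F : Beam N) : Prop :=
  (∀ k : ℕ, 1 ≤ k → k ≤ N → cg F.1 k ≠ cg F.2 k) ∧
  cg F.1 0 = pt (-1) 0 ∧ cg F.2 0 = pt (-1) 0 ∧
  cg F.1 (N + 1) = cg F.2 (N + 1) ∧
  midpoint ℝ (cg F.1 1) (cg F.2 1) = pt 0 0

def lineThrough (p q : Pt) : Set Pt := {x | ∃ u : ℝ, x = p + u • (q - p)}

noncomputable def pickPt (S : Set Pt) : Pt := if h : S.Nonempty then h.choose else 0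

noncomputable def pickR (S : Set ℝ) : ℝ := if h : S.Nonempty then h.choose else 0

/-- `impact F t k` is the `(k+1)`-st impact point `P_{k+1}^t` of the `t`-polygonal chain. -/
noncomputable def impact {N : ℕ} (F : Beam N) (t : ℝ) : ℕ → Pt
  | 0 => (1 - t) • cg F.1 1 + t • cg F.2 1
  | k + 1 =>
    let i := k + 2
    let prev := impact F t k
    if (lineThrough (cg F.1 (i - 1)) (cg F.1 i) ∩
        lineThrough (cg F.2 (i - 1)) (cg F.2 i)).Nonempty then
      pickPt (lineThrough prev
          (pickPt (lineThrough (cg F.1 (i - 1)) (cg F.1 i) ∩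
            lineThrough (cg F.2 (i - 1)) (cg F.2 i))) ∩
        segment ℝ (cg F.1 i) (cg F.2 i))
    else
      (1 - pickR {l : ℝ | prev = (1 - l) • cg F.1 (i - 1) + l • cg F.2 (i - 1)}) • cg F.1 i +
        pickR {l : ℝ | prev = (1 - l) • cg F.1 (i - 1) + l • cg F.2 (i - 1)} • cg F.2 i

/-- The `t`-polygonal chain `P_t` of a (primary) beam. -/
noncomputable def tChain {N : ℕ} (F : Beam N) (t : ℝ) : Chain N :=
  fun i => if (i : ℕ) = 0 then impact F t 0 + pt (-1) 0 else impact F t ((i : ℕ) - 1)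

/-- The `k`-th mirror `S_k = [a_k, b_k]` of a beam. -/
def mirror {N : ℕ} (F : Beam N) (k : ℕ) : Set Pt := segment ℝ (cg F.1 k) (cg F.2 k)

def NonObscuration {N : ℕ} (F : Beam N) : Prop :=
  ∀ j : ℕ, j ≤ N → ∀ t ∈ Icc (0 : ℝ) 1, ∀ k : ℕ,
    1 ≤ k → k ≤ N + 1 → k ≠ j → k ≠ j + 1 → ray (tChain F t) j ∩ mirror F k = ∅

/-- Four reals are nonzero and of the same sign. -/
def SameSign₄ (x y z w : ℝ) : Prop := 0 < x * y ∧ 0 < x * z ∧ 0 < x * w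

/-- A unit normal vector to the direction `u`. -/
noncomputable def normalOf (u : Pt) : Pt := ‖u‖⁻¹ • pt (-u 1) (u 0)

def ReflexionCond {N : ℕ} (F : Beam N) : Prop :=
  ∀ i : ℕ, 1 ≤ i → i ≤ N →
    SameSign₄
      (dot (cg F.1 (i - 1) - cg F.1 i) (normalOf (cg F.2 i - cg F.1 i)))
      (dot (cg F.2 (i - 1) - cg F.2 i) (normalOf (cg F.2 i - cg F.1 i)))
      (dot (cg F.1 (i + 1) - cg F.1 i) (normalOf (cg F.2 i - cg F.1 i)))
      (dot (cg F.2 (i + 1) - cg F.2 i) (normalOf (cg F.2 i - cg F.1 i)))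

/-- The space of `N`-beams. -/
def Faisc (N : ℕ) : Set (Beam N) :=
  {F | IsPrimaryBeam F ∧ NonObscuration F ∧ ReflexionCond F}

/-- The centered polygonal chain `M(F) = P_{1/2}`. -/
noncomputable def MF {N : ℕ} (F : Beam N) : Chain N := tChain F (1 / 2)

/-- The reflexive polygonal chain induced by a beam. -/
noncomputable def MR {N : ℕ} (F : Beam N) : RChain N :=
  (MF F, fun j => angleOf (cg F.1 (j.1 + 1) - cg F.2 (j.1 + 1)))

/-- The characteristic of a beam. -/
noncomputable def CarF {N : ℕ} (F : Beam N) : Fin N → ℤ := Car (MR F)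

/-- The pair of polygonal chains `P_l(L)` built from a reflexive chain and mirror
half-lengths `la, lb` (indexed by `1 ≤ j ≤ N`). -/
noncomputable def Pl {N : ℕ} (L : RChain N) (la lb : ℕ → ℝ) : Beam N :=
  (fun i => if 1 ≤ (i : ℕ) ∧ (i : ℕ) ≤ N
      then L.1 i + la (i : ℕ) • dirvec (θg L.2 (i : ℕ)) else L.1 i,
   fun i => if 1 ≤ (i : ℕ) ∧ (i : ℕ) ≤ N
      then L.1 i - lb (i : ℕ) • dirvec (θg L.2 (i : ℕ)) else L.1 i)

/-- Minimal mirror-to-mirror distance of a reflexive chain. -/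
noncomputable def dR {N : ℕ} (L : RChain N) : ℝ :=
  sInf {r | ∃ i : ℕ, 1 ≤ i ∧ i ≤ N ∧
    r = min |dot (cg L.1 (i - 1) - cg L.1 i) (nvec (θg L.2 i))|
          |dot (cg L.1 (i + 1) - cg L.1 i) (nvec (θg L.2 i))|}

/-- Minimal distance from the non-adjacent mirrors to the rays. -/
noncomputable def dO {N : ℕ} (L : RChain N) : ℝ :=
  sInf {r | ∃ j k : ℕ, j ≤ N ∧ 1 ≤ k ∧ k ≤ N + 1 ∧ k ≠ j ∧ k ≠ j + 1 ∧
    r = Metric.infDist (cg L.1 k) (ray L.1 j)}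

/-- `K = max_{1 ≤ j ≤ N} max (la j) (lb j)`. -/
noncomputable def Kmax (N : ℕ) (la lb : ℕ → ℝ) : ℝ :=
  sSup {r | ∃ j : ℕ, 1 ≤ j ∧ j ≤ N ∧ r = max (la j) (lb j)}

/-- The subbeam `F_μ` of a beam. -/
noncomputable def subBeam {N : ℕ} (F : Beam N) (μ : ℝ) : Beam N :=
  (fun i => if (i : ℕ) = 0 then pt (-1) 0 else tChain F ((1 - μ) / 2) i,
   fun i => if (i : ℕ) = 0 then pt (-1) 0 else tChain F ((1 + μ) / 2) i)

section Aux

lemma pt_app0 (x y : ℝ) : pt x y 0 = x := rfl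
lemma pt_app1 (x y : ℝ) : pt x y 1 = y := rfl

lemma mem_arc_iff (α : Real.Angle) (ε : ℤ) (hε : ε = 1 ∨ ε = -1) (θ : Real.Angle) :
    θ ∈ arc α ε ↔ 0 < (ε : ℝ) * (θ - α).sin := by
  constructor
  · rintro ⟨s, hs0, hsπ, rfl⟩
    rw [add_sub_cancel_left, Real.Angle.sin_coe]
    have := Real.sin_pos_of_pos_of_lt_pi hs0 hsπ
    rcases hε with rfl | rfl <;> push_cast <;> simp [Real.sin_neg] <;> linarith [this]
  · intro h
    have h1 := (Real.Angle.toReal_mem_Ioc (θ - α)).1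
    have h2 := (Real.Angle.toReal_mem_Ioc (θ - α)).2
    have hs : (θ - α).sin = Real.sin (θ - α).toReal := (Real.Angle.sin_toReal _).symm
    set t := (θ - α).toReal with htdef
    have hco : ((t : ℝ) : Real.Angle) = θ - α := Real.Angle.coe_toReal _
    rcases hε with rfl | rfl
    · push_cast at h; rw [one_mul, hs] at h
      have ht0 : 0 < t := by
        by_contra hle
        exact absurd h (not_lt.2 (Real.sin_nonpos_of_nonpos_of_neg_pi_le (not_lt.1 hle) h1.le))
      have htπ : t < π := lt_of_le_of_ne h2
        (by intro he; rw [he, Real.sin_pi] at h; exact lt_irrefl _ h)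
      exact ⟨t, ht0, htπ, by push_cast; rw [one_mul, hco]; abel⟩
    · push_cast at h; rw [hs] at h
      have hsneg : Real.sin t < 0 := by nlinarith
      have ht0 : t < 0 := by
        by_contra hle
        exact absurd hsneg (not_lt.2 (Real.sin_nonneg_of_nonneg_of_le_pi (not_lt.1 hle) h2))
      refine ⟨-t, by linarith, by linarith, ?_⟩
      push_cast
      rw [show (-1 : ℝ) * -t = t by ring, hco]; abel

lemma dot_neg_nvec (v : Pt) (hv : ¬ (v 0 = 0 ∧ v 1 = 0)) (θ : Real.Angle) :
    dot (-v) (nvec θ) = ‖(⟨v 0, v 1⟩ : ℂ)‖ * (θ - angleOf v).sin := by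
  induction θ using Real.Angle.induction_on with
  | h x =>
    set z : ℂ := ⟨v 0, v 1⟩ with hz
    have hz0 : z ≠ 0 := by
      simp only [hz, ne_eq, Complex.ext_iff, Complex.zero_re, Complex.zero_im]
      tauto
    have habs : 0 < ‖z‖ := norm_pos_iff.mpr hz0
    have hcos : Real.cos z.arg = v 0 / ‖z‖ := Complex.cos_arg hz0
    have hsin : Real.sin z.arg = v 1 / ‖z‖ := Complex.sin_arg z
    have hd : ((x : ℝ) : Real.Angle) - angleOf v = ((x - z.arg : ℝ) : Real.Angle) := by
      rw [angleOf]; push_cast; rfl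
    rw [hd, Real.Angle.sin_coe, Real.sin_sub]
    simp only [dot, nvec, Real.Angle.sin_coe, Real.Angle.cos_coe, pt_app0, pt_app1]
    have e0 : (-v) 0 = -(v 0) := rfl
    have e1 : (-v) 1 = -(v 1) := rfl
    rw [e0, e1, hcos, hsin]
    field_simp
    ring

lemma abs_pos_of_ne (v : Pt) (hv : ¬ (v 0 = 0 ∧ v 1 = 0)) :
    0 < ‖(⟨v 0, v 1⟩ : ℂ)‖ := by
  refine norm_pos_iff.mpr ?_
  simp only [ne_eq, Complex.ext_iff, Complex.zero_re, Complex.zero_im]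
  tauto

lemma sub_comp_ne (p q : Pt) (h : p ≠ q) : ¬ ((p - q) 0 = 0 ∧ (p - q) 1 = 0) := by
  rintro ⟨h0, h1⟩
  apply h
  have e0 : (p - q) 0 = p 0 - q 0 := rfl
  have e1 : (p - q) 1 = p 1 - q 1 := rfl
  rw [e0] at h0; rw [e1] at h1
  ext i
  fin_cases i
  · exact sub_eq_zero.mp h0
  · exact sub_eq_zero.mp h1

lemma union_iff_sin (α β θ : Real.Angle) (ε : ℤ) (hε : ε = 1 ∨ ε = -1) :
    θ ∈ (arc α ε ∩ arc β ε) ∪ (arc α (-ε) ∩ arc β (-ε)) ↔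
      0 < (θ - α).sin * (θ - β).sin := by
  have hε' : -ε = 1 ∨ -ε = -1 := by rcases hε with rfl | rfl <;> simp
  rw [Set.mem_union, Set.mem_inter_iff, Set.mem_inter_iff,
    mem_arc_iff α ε hε, mem_arc_iff β ε hε, mem_arc_iff α (-ε) hε', mem_arc_iff β (-ε) hε']
  conv_rhs => rw [mul_pos_iff]
  rcases hε with rfl | rfl <;> push_cast <;>
    simp only [one_mul, neg_neg, neg_mul, neg_pos] <;> tauto

lemma adj_ne {N : ℕ} (c : Chain N) (hc : c ∈ LO N) (j : ℕ)
    (h1 : 1 ≤ j) (h2 : j ≤ N) :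
    cg c j ≠ cg c (j - 1) ∧ cg c j ≠ cg c (j + 1) := by
  have hnob := hc.1
  have h01 : cg c 0 ≠ cg c 1 := fun h => hnob (Or.inl h)
  have hK : ∀ j' k : ℕ, j' ≤ N → 1 ≤ k → k ≤ N + 1 → k ≠ j' → k ≠ j' + 1 →
      cg c k ∉ ray c j' := fun j' k a b d e f g =>
    hnob (Or.inr ⟨j', k, a, b, d, e, f, g⟩)
  constructor
  · intro heq
    match j, h1, h2 with
    | 1, _, _ => exact h01 (by simpa using heq.symm)
    | (j' + 2), _, h2 =>
      refine hK j' (j' + 2) (by omega) (by omega) (by omega) (by omega) (by omega) ?_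
      rw [ray]
      rcases Nat.eq_zero_or_pos j' with rfl | hj'
      · rw [if_pos rfl]
        have heq' : cg c 2 = cg c 1 := heq
        refine ⟨by rw [heq']; exact right_mem_segment ℝ _ _, ?_⟩
        simp only [Set.mem_singleton_iff]
        intro h0
        exact h01 (by rw [← h0, heq'])
      · rw [if_neg (by omega)]
        have heq' : cg c (j' + 2) = cg c (j' + 1) := heq
        rw [heq']
        exact right_mem_segment ℝ _ _
  · intro heq
    rcases lt_or_eq_of_le h2 with hlt | rfl
    · refine hK (j + 1) j (by omega) h1 (by omega) (by omega) (by omega) ?_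
      rw [ray, if_neg (by omega), heq]
      exact left_mem_segment ℝ _ _
    · refine hK (j - 1) (j + 1) (by omega) (by omega) (by omega) (by omega) (by omega) ?_
      rcases Nat.lt_or_ge j 2 with hj1 | hj2
      · have hj : j = 1 := by omega
        subst hj
        rw [ray, if_pos (by omega)]
        refine ⟨by rw [← heq]; exact right_mem_segment ℝ _ _, ?_⟩
        simp only [Set.mem_singleton_iff]
        intro h0
        exact h01 (by rw [← h0, ← heq])
      · rw [ray, if_neg (by omega), show j - 1 + 1 = j by omega, ← heq]
        exact right_mem_segment ℝ _ _

end Aux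

/-- `((c_i),(θ_j))` is a reflexive polygonal chain iff each `θ_j`
lies in `(A_L^+)_j ∪ (A_L^-)_j`. -/
theorem statement0 (N : ℕ) (hN : 1 ≤ N) (c : Chain N) (hc : c ∈ LO N)
    (θ : Fin N → Real.Angle) :
    IsReflexive c θ ↔ ∀ j : ℕ, 1 ≤ j → j ≤ N → θg θ j ∈ APlus c j ∪ AMinus c j := by
  have key : ∀ j : ℕ, 1 ≤ j → j ≤ N →
      ((0 < dot (cg c (j + 1) - cg c j) (nvec (θg θ j)) *
          dot (cg c (j - 1) - cg c j) (nvec (θg θ j))) ↔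
        θg θ j ∈ APlus c j ∪ AMinus c j) := by
    intro j h1 h2
    obtain ⟨hp, hq⟩ := adj_ne c hc j h1 h2
    have hA := sub_comp_ne _ _ hp
    have hB := sub_comp_ne _ _ hq
    have ea : cg c (j - 1) - cg c j = -(cg c j - cg c (j - 1)) := (neg_sub _ _).symm
    have eb : cg c (j + 1) - cg c j = -(cg c j - cg c (j + 1)) := (neg_sub _ _).symm
    have hra := abs_pos_of_ne _ hA
    have hrb := abs_pos_of_ne _ hB
    have hεone : ((-1 : ℤ) ^ j = 1 ∨ (-1 : ℤ) ^ j = -1) := neg_one_pow_eq_or _ _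
    have hpow : ((-1 : ℤ)) ^ (j + 1) = -((-1 : ℤ) ^ j) := by rw [pow_succ, mul_neg_one]
    rw [ea, eb, dot_neg_nvec _ hA (θg θ j), dot_neg_nvec _ hB (θg θ j)]
    rw [show θg θ j ∈ APlus c j ∪ AMinus c j ↔
        0 < (θg θ j - angleOf (cg c j - cg c (j - 1))).sin *
          (θg θ j - angleOf (cg c j - cg c (j + 1))).sin by
      rw [APlus, AMinus, hpow]
      exact union_iff_sin _ _ _ _ hεone]
    constructor <;> intro h <;> nlinarith [mul_pos hra hrb, hra, hrb]
  constructor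
  · intro h j h1 h2
    exact (key j h1 h2).1 (h j h1 h2)
  · intro h j h1 h2
    exact (key j h1 h2).2 (h j h1 h2)
end
end

section
/- Let N ≥ 1, let L = (c_i) ∈ LO^N(ℝ²) and let 1 ≤ j ≤ N. Then the set of β ∈ ℝ/2πℤ satisfying 2β = A(c_{j−1} − c_j) + A(c_j − c_{j+1}) has exactly two elements, and exactly one of them lies in (A_L^+)_j while the other lies in (A_L^−)_j. -/
open Real Set
open scoped Classical

noncomputable section

namespace S3Aux

lemma coe_eq_coe (x y : ℝ) (k : ℤ) (h : x - y = 2 * π * k) :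
    (x : Real.Angle) = (y : Real.Angle) :=
  Real.Angle.angle_eq_iff_two_pi_dvd_sub.2 ⟨k, h⟩

/-- The two arcs `arc α 1` and `arc α (-1)` are disjoint. -/
lemma arc_disjoint {α β : Real.Angle} (h1 : β ∈ arc α 1) (h2 : β ∈ arc α (-1)) : False := by
  obtain ⟨s, hs0, hsπ, rfl⟩ := h1
  obtain ⟨t, ht0, htπ, heq⟩ := h2
  have h := add_left_cancel heq
  rw [Real.Angle.angle_eq_iff_two_pi_dvd_sub] at h
  obtain ⟨k, hk⟩ := h
  push_cast at hk
  have hk1 : 0 < (k : ℝ) := by nlinarith [Real.pi_pos]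
  have hk2 : (k : ℝ) < 1 := by nlinarith [Real.pi_pos]
  have : (0 : ℤ) < k := by exact_mod_cast hk1
  have : k < 1 := by exact_mod_cast hk2
  omega

/-- Key angle lemma. -/
lemma key (u v : Real.Angle) (h : v - u ≠ (π : Real.Angle)) :
    ∃ p q : Real.Angle, p ≠ q ∧
      {β : Real.Angle | β + β = u + (π : Real.Angle) + v} = {p, q} ∧
      p ∈ arc u 1 ∩ arc v 1 ∧ q ∈ arc u (-1) ∩ arc v (-1) := by
  set δ : ℝ := (v - u).toReal with hδdef
  have hδ1 : -π < δ := Real.Angle.neg_pi_lt_toReal _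
  have hδ2 : δ < π := lt_of_le_of_ne (Real.Angle.toReal_le_pi _)
    (fun hh => h (Real.Angle.toReal_eq_pi_iff.mp hh))
  have hcoe : ((δ : ℝ) : Real.Angle) = v - u := Real.Angle.coe_toReal _
  have hv : v = u + ((δ : ℝ) : Real.Angle) := by rw [hcoe]; abel
  set p : Real.Angle := u + (((δ + π) / 2 : ℝ) : Real.Angle) with hp
  set q : Real.Angle := p + (π : Real.Angle) with hq
  have hpq : p ≠ q := by
    rw [hq]
    intro hh
    exact Real.Angle.pi_ne_zero (left_eq_add.mp hh)
  have hpeq : p + p = u + (π : Real.Angle) + v := by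
    rw [hp, hv]
    rw [show u + ↑((δ + π) / 2) + (u + ↑((δ + π) / 2)) =
        u + u + (↑((δ + π) / 2) + ↑((δ + π) / 2)) by abel]
    rw [← Real.Angle.coe_add, show (δ + π) / 2 + (δ + π) / 2 = π + δ by ring,
      Real.Angle.coe_add]
    abel
  have hqeq : q + q = u + (π : Real.Angle) + v := by
    rw [hq, show p + ↑π + (p + ↑π) = p + p + (↑π + ↑π) by abel, ← Real.Angle.coe_add,
      show π + π = 2 * π by ring, Real.Angle.coe_two_pi, add_zero, hpeq]
  refine ⟨p, q, hpq, ?_, ⟨⟨(δ + π) / 2, by linarith, by linarith, by norm_num; exact hp⟩,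
      ⟨(π - δ) / 2, by linarith, by linarith, ?_⟩⟩,
      ⟨⟨(π - δ) / 2, by linarith, by linarith, ?_⟩,
      ⟨(π + δ) / 2, by linarith, by linarith, ?_⟩⟩⟩
  · ext β
    simp only [Set.mem_setOf_eq, Set.mem_insert_iff, Set.mem_singleton_iff]
    constructor
    · intro hβ
      have h2 : (2 : ℕ) • (β - p) = 0 := by
        rw [two_nsmul]
        have : β + β = p + p := by rw [hβ, hpeq]
        rw [show β - p + (β - p) = β + β - (p + p) by abel, this, sub_self]
      rcases Real.Angle.two_nsmul_eq_zero_iff.mp h2 with h0 | hπ'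
      · exact Or.inl (by rwa [sub_eq_zero] at h0)
      · exact Or.inr (by rw [hq, ← hπ']; abel)
    · rintro (rfl | rfl)
      · exact hpeq
      · exact hqeq
  · rw [hp, hv]
    rw [show u + ↑δ + ↑((1 : ℤ) * ((π - δ) / 2)) = u + (↑δ + ↑(((1:ℤ):ℝ) * ((π - δ) / 2))) by
      push_cast; abel, ← Real.Angle.coe_add]
    congr 1
    exact coe_eq_coe _ _ 0 (by push_cast; ring)
  · rw [hq, hp, show u + ↑((δ + π) / 2) + ↑π = u + (↑((δ + π) / 2) + ↑π) by abel,
      ← Real.Angle.coe_add]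
    congr 1
    exact coe_eq_coe _ _ 1 (by push_cast; ring)
  · rw [hq, hp, hv, show u + ↑((δ + π) / 2) + ↑π = u + (↑((δ + π) / 2) + ↑π) by abel,
      show u + ↑δ + ↑(((-1 : ℤ) : ℝ) * ((π + δ) / 2)) =
        u + (↑δ + ↑(((-1 : ℤ) : ℝ) * ((π + δ) / 2))) by abel,
      ← Real.Angle.coe_add, ← Real.Angle.coe_add]
    congr 1
    exact coe_eq_coe _ _ 1 (by push_cast; ring)

def zc (v : Pt) : ℂ := ⟨v 0, v 1⟩

lemma zc_ne_zero {v : Pt} (hv : v ≠ 0) : zc v ≠ 0 := by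
  intro h
  apply hv
  rw [Complex.ext_iff] at h
  ext i
  fin_cases i
  · exact h.1
  · exact h.2

lemma angleOf_eq (v : Pt) : angleOf v = ((Complex.arg (zc v) : ℝ) : Real.Angle) := rfl

lemma zc_neg (v : Pt) : zc (-v) = -(zc v) := by
  apply Complex.ext <;> simp [zc, PiLp.neg_apply]

lemma angleOf_neg {v : Pt} (hv : v ≠ 0) : angleOf (-v) = angleOf v + (π : Real.Angle) := by
  rw [angleOf_eq, angleOf_eq, zc_neg]
  exact Complex.arg_neg_coe_angle (zc_ne_zero hv)

end S3Aux

/-- the solutions of `2β = A(c_{j-1} - c_j) + A(c_j - c_{j+1})` form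
a two-element set, one element in `(A_L^+)_j` and the other in `(A_L^-)_j`. -/
theorem statement3 (N : ℕ) (hN : 1 ≤ N) (c : Chain N) (hc : c ∈ LO N)
    (j : ℕ) (hj1 : 1 ≤ j) (hj2 : j ≤ N) :
    ∃ b₁ b₂ : Real.Angle, b₁ ≠ b₂ ∧
      {β : Real.Angle |
          β + β = angleOf (cg c (j - 1) - cg c j) + angleOf (cg c j - cg c (j + 1))}
        = {b₁, b₂} ∧
      b₁ ∈ APlus c j ∧ b₁ ∉ AMinus c j ∧ b₂ ∈ AMinus c j ∧ b₂ ∉ APlus c j := by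
  classical
  obtain ⟨hNO, hNG⟩ := hc
  -- the two adjacent vectors
  set w₁ : Pt := cg c j - cg c (j - 1) with hw₁
  set w₂ : Pt := cg c j - cg c (j + 1) with hw₂
  -- nondegeneracy of endpoints
  have hA : cg c j ≠ cg c (j - 1) := by
    intro h
    apply hNO
    rcases eq_or_lt_of_le hj1 with h1 | h1
    · left
      rw [← h1] at h
      exact h.symm
    · right
      refine ⟨j, j - 1, hj2, by omega, by omega, by omega, by omega, ?_⟩
      rw [ray, if_neg (by omega)]
      exact h ▸ left_mem_segment ℝ _ _
  have hB : cg c j ≠ cg c (j + 1) := by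
    intro h
    apply hNO
    rcases eq_or_lt_of_le hj1 with h1 | h1
    · by_cases h01 : cg c 0 = cg c 1
      · exact Or.inl h01
      · right
        refine ⟨0, 2, Nat.zero_le N, by omega, by omega, by omega, by omega, ?_⟩
        rw [ray, if_pos rfl]
        rw [← h1] at h
        exact ⟨h ▸ right_mem_segment ℝ _ _, by simpa using h ▸ (Ne.symm h01)⟩
    · right
      refine ⟨j - 1, j + 1, by omega, by omega, by omega, by omega, by omega, ?_⟩
      rw [ray, if_neg (by omega), show j - 1 + 1 = j by omega]
      exact h ▸ right_mem_segment ℝ _ _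
  have hw₁0 : w₁ ≠ 0 := sub_ne_zero.mpr hA
  have hw₂0 : w₂ ≠ 0 := sub_ne_zero.mpr hB
  set u : Real.Angle := angleOf w₁ with hu
  set v : Real.Angle := angleOf w₂ with hv
  -- nondegeneracy of the angles
  have hC : v - u ≠ (π : Real.Angle) := by
    intro hvu
    apply hNG
    have hv' : v = (Complex.arg (-(S3Aux.zc w₁)) : Real.Angle) := by
      rw [Complex.arg_neg_coe_angle (S3Aux.zc_ne_zero hw₁0)]
      rw [sub_eq_iff_eq_add] at hvu
      rw [hvu, hu, S3Aux.angleOf_eq, add_comm]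
    have harg : Complex.arg (S3Aux.zc w₂) = Complex.arg (-(S3Aux.zc w₁)) :=
      Complex.arg_coe_angle_eq_iff.mp (by rw [← S3Aux.angleOf_eq, ← hv]; exact hv')
    have hz₂ : S3Aux.zc w₂ ≠ 0 := S3Aux.zc_ne_zero hw₂0
    have hz₁ : -(S3Aux.zc w₁) ≠ 0 := neg_ne_zero.mpr (S3Aux.zc_ne_zero hw₁0)
    have heq := (Complex.arg_eq_arg_iff hz₂ hz₁).mp harg
    set t : ℝ := ‖-(S3Aux.zc w₁)‖ / ‖S3Aux.zc w₂‖ with ht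
    have ht0 : 0 < t := div_pos (norm_pos_iff.mpr hz₁) (norm_pos_iff.mpr hz₂)
    have heq' : (t : ℂ) * S3Aux.zc w₂ = -(S3Aux.zc w₁) := by
      rw [ht]
      push_cast
      exact heq
    have hre : t * (w₂ 0) = -(w₁ 0) := by
      have := congrArg Complex.re heq'
      simpa [Complex.re_ofReal_mul, S3Aux.zc] using this
    have him : t * (w₂ 1) = -(w₁ 1) := by
      have := congrArg Complex.im heq'
      simpa [Complex.im_ofReal_mul, S3Aux.zc] using this
    have h1t : (0 : ℝ) < 1 + t := by linarith
    refine ⟨j, hj1, hj2, 1 / (1 + t), t / (1 + t), by positivity, by positivity,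
      by field_simp, ?_⟩
    ext i
    have hwc₁ : ∀ i, w₁ i = cg c j i - cg c (j - 1) i := fun i => by rw [hw₁]; rfl
    have hwc₂ : ∀ i, w₂ i = cg c j i - cg c (j + 1) i := fun i => by rw [hw₂]; rfl
    fin_cases i
    · show (1 / (1 + t)) • cg c (j - 1) 0 + (t / (1 + t)) • cg c (j + 1) 0 = cg c j 0
      rw [hwc₁ 0, hwc₂ 0] at hre
      rw [smul_eq_mul, smul_eq_mul]
      field_simp
      linarith [hre]
    · show (1 / (1 + t)) • cg c (j - 1) 1 + (t / (1 + t)) • cg c (j + 1) 1 = cg c j 1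
      rw [hwc₁ 1, hwc₂ 1] at him
      rw [smul_eq_mul, smul_eq_mul]
      field_simp
      linarith [him]
  obtain ⟨p, q, hpq, hset, hp, hq⟩ := S3Aux.key u v hC
  -- rewrite the target equation set
  have hrw : angleOf (cg c (j - 1) - cg c j) = u + (π : Real.Angle) := by
    rw [show cg c (j - 1) - cg c j = -w₁ by rw [hw₁]; abel, S3Aux.angleOf_neg hw₁0, hu]
  have hsets : {β : Real.Angle |
      β + β = angleOf (cg c (j - 1) - cg c j) + angleOf (cg c j - cg c (j + 1))} = {p, q} := by
    rw [← hset]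
    ext β
    simp only [Set.mem_setOf_eq, hrw, ← hv, ← hw₂]
  rcases Nat.even_or_odd j with he | ho
  · have e1 : ((-1 : ℤ)) ^ j = 1 := he.neg_one_pow
    have e2 : ((-1 : ℤ)) ^ (j + 1) = -1 := (Even.add_one he).neg_one_pow
    refine ⟨p, q, hpq, hsets, ?_, ?_, ?_, ?_⟩
    · rw [APlus, e1]; exact hp
    · rw [AMinus, e2]
      intro hm
      exact S3Aux.arc_disjoint hp.1 hm.1
    · rw [AMinus, e2]; exact hq
    · rw [APlus, e1]
      intro hm
      exact S3Aux.arc_disjoint hm.1 hq.1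
  · have e1 : ((-1 : ℤ)) ^ j = -1 := ho.neg_one_pow
    have e2 : ((-1 : ℤ)) ^ (j + 1) = 1 := (Odd.add_one ho).neg_one_pow
    refine ⟨q, p, hpq.symm, by rw [hsets, Set.pair_comm], ?_, ?_, ?_, ?_⟩
    · rw [APlus, e1]; exact hq
    · rw [AMinus, e2]
      intro hm
      exact S3Aux.arc_disjoint hm.1 hq.1
    · rw [AMinus, e2]; exact hp
    · rw [APlus, e1]
      intro hm
      exact S3Aux.arc_disjoint hp.1 hm.1
end
end

section
/- Let N ≥ 1 and let L, L' ∈ LR^N(ℝ²) be such that M_O(L) and M_O(L') lie in the same path-connected component of LO^N(ℝ²) and Car(L) = Car(L'). Then there exists a continuous path γ_R : [0,1] → LR^N(ℝ²) with γ_R(0) = L and γ_R(1) = L'; in particular L and L' lie in the same path-connected component of LR^N(ℝ²). -/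
open Real Set
open scoped Classical

noncomputable section

lemma dot_eq_inner (u v : Pt) : dot u v = inner ℝ u v := by
  rw [PiLp.inner_apply]; simp [Fin.sum_univ_two, RCLike.inner_apply, dot]; ring

lemma dot_smul_right (u : Pt) (a : ℝ) (x : Pt) : dot u (a • x) = a * dot u x := by
  simp [dot]; ring

lemma dot_add_right (u x y : Pt) : dot u (x + y) = dot u x + dot u y := by
  simp [dot]; ring

@[simp] lemma pt_apply0 (a b : ℝ) : pt a b 0 = a := rfl
@[simp] lemma pt_apply1 (a b : ℝ) : pt a b 1 = b := rfl

/-- The angle whose normal vector `nvec` points in direction `x`. -/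
noncomputable def vecToAngle (x : Pt) : Real.Angle := angleOf (pt (x 1) (-(x 0)))

lemma pt_ext (x : Pt) : pt (x 0) (x 1) = x := by
  ext i; fin_cases i <;> rfl

lemma nvec_vecToAngle {x : Pt} (hx : x ≠ 0) : nvec (vecToAngle x) = ‖x‖⁻¹ • x := by
  have hz : (⟨x 1, -(x 0)⟩ : ℂ) ≠ 0 := by
    simp only [ne_eq, Complex.ext_iff, Complex.zero_re, Complex.zero_im]
    rintro ⟨h1, h0⟩
    apply hx
    have h0' : x 0 = 0 := by linarith
    ext i; fin_cases i <;> simp_all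
  have habs : ‖(⟨x 1, -(x 0)⟩ : ℂ)‖ = ‖x‖ := by
    rw [Complex.norm_def, Complex.normSq_mk, EuclideanSpace.norm_eq]
    simp [Fin.sum_univ_two, sq]; ring_nf
  have hcos : Real.cos (Complex.arg ⟨x 1, -(x 0)⟩) = x 1 / ‖x‖ := by
    rw [Complex.cos_arg hz, habs]
  have hsin : Real.sin (Complex.arg ⟨x 1, -(x 0)⟩) = -(x 0) / ‖x‖ := by
    rw [Complex.sin_arg, habs]
  have key : nvec (vecToAngle x) = pt (x 0 / ‖x‖) (x 1 / ‖x‖) := by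
    rw [vecToAngle, angleOf, nvec]
    rw [Real.Angle.sin_coe, Real.Angle.cos_coe]
    simp only [pt_apply0, pt_apply1]
    rw [hcos, hsin, neg_div, neg_neg]
  rw [key]
  have h2 : ‖x‖⁻¹ • x = pt ((‖x‖⁻¹ • x) 0) ((‖x‖⁻¹ • x) 1) := (pt_ext _).symm
  rw [h2]
  show pt _ _ = pt ((‖x‖⁻¹ * x 0)) ((‖x‖⁻¹ * x 1))
  rw [div_eq_inv_mul, div_eq_inv_mul]

lemma vecToAngle_nvec (θ : Real.Angle) : vecToAngle (nvec θ) = θ := by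
  rw [vecToAngle]
  have h1 : pt ((nvec θ) 1) (-((nvec θ) 0)) = pt θ.cos θ.sin := by
    rw [nvec]; simp
  rw [h1, angleOf]
  have : (⟨(pt θ.cos θ.sin) 0, (pt θ.cos θ.sin) 1⟩ : ℂ)
      = (θ.cos : ℂ) + (θ.sin : ℂ) * Complex.I := by
    rw [Complex.ext_iff]; simp
  rw [this, Complex.arg_cos_add_sin_mul_I_coe_angle]
lemma norm_pos_of_ne {x : Pt} (hx : x ≠ 0) : 0 < ‖x‖ := norm_pos_iff.mpr hx

lemma dot_nvec_eq_sin {x : Pt} (hx : x ≠ 0) (θ : Real.Angle) :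
    dot x (nvec θ) = ‖x‖ * Real.Angle.sin (angleOf x - θ) := by
  induction θ using Real.Angle.induction_on with
  | h t =>
    have hz : (⟨x 0, x 1⟩ : ℂ) ≠ 0 := by
      simp only [ne_eq, Complex.ext_iff, Complex.zero_re, Complex.zero_im]
      rintro ⟨h0, h1⟩
      exact hx (by ext i; fin_cases i <;> simp_all)
    have habs : ‖(⟨x 0, x 1⟩ : ℂ)‖ = ‖x‖ := by
      rw [Complex.norm_def, Complex.normSq_mk, EuclideanSpace.norm_eq]
      simp [Fin.sum_univ_two, sq]
    have hA : angleOf x - (t : Real.Angle) = ((Complex.arg ⟨x 0, x 1⟩ - t : ℝ) : Real.Angle) := by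
      rw [angleOf, Real.Angle.coe_sub]
    rw [hA, Real.Angle.sin_coe, Real.sin_sub, Complex.sin_arg, Complex.cos_arg hz, habs]
    have h0 : ‖x‖ ≠ 0 := (norm_pos_of_ne hx).ne'
    show x 0 * (-Real.sin t) + x 1 * Real.cos t = _
    field_simp
    ring

lemma arc_iff {x : Pt} (hx : x ≠ 0) {ε : ℤ} (hε : ε = 1 ∨ ε = -1) (θ : Real.Angle) :
    θ ∈ arc (angleOf x) ε ↔ (ε : ℝ) * dot x (nvec θ) < 0 := by
  have hnx := norm_pos_of_ne hx
  constructor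
  · rintro ⟨s, hs0, hsπ, rfl⟩
    have : angleOf x - (angleOf x + (((ε : ℝ) * s : ℝ) : Real.Angle))
        = ((-((ε : ℝ) * s) : ℝ) : Real.Angle) := by
      rw [Real.Angle.coe_neg]
      abel
    rw [dot_nvec_eq_sin hx, this, Real.Angle.sin_coe]
    have hss : 0 < Real.sin s := Real.sin_pos_of_pos_of_lt_pi hs0 hsπ
    rcases hε with h | h <;> subst h <;>
      · push_cast
        simp [Real.sin_neg]
        nlinarith
  · intro h
    have hsin : 0 < (ε : ℝ) * Real.Angle.sin (θ - angleOf x) := by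
      have hd := dot_nvec_eq_sin hx θ
      have : Real.Angle.sin (angleOf x - θ) = -Real.Angle.sin (θ - angleOf x) := by
        rw [← Real.Angle.sin_neg, neg_sub]
      rw [hd, this] at h
      nlinarith
    rcases hε with h1 | h1 <;> subst h1
    · set ψ := θ - angleOf x with hψ
      have hsψ : 0 < Real.sin ψ.toReal := by
        rw [Real.Angle.sin_toReal]; simpa using hsin
      have h0 : 0 < ψ.toReal := by
        by_contra hle
        push_neg at hle
        exact absurd hsψ (not_lt.mpr (Real.sin_nonpos_of_nonpos_of_neg_pi_le hle
          (Real.Angle.neg_pi_lt_toReal ψ).le))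
      have hπ : ψ.toReal < π := by
        rcases lt_or_eq_of_le (Real.Angle.toReal_le_pi ψ) with h | h
        · exact h
        · rw [h] at hsψ; simp [Real.sin_pi] at hsψ
      refine ⟨ψ.toReal, h0, hπ, ?_⟩
      have : ((((1:ℤ):ℝ) * ψ.toReal : ℝ) : Real.Angle) = (ψ.toReal : Real.Angle) := by
        push_cast; rw [one_mul]
      rw [this, Real.Angle.coe_toReal, hψ]
      abel
    · set ψ := angleOf x - θ with hψ
      have hsψ : 0 < Real.sin ψ.toReal := by
        rw [Real.Angle.sin_toReal]
        have : Real.Angle.sin ψ = -Real.Angle.sin (θ - angleOf x) := by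
          rw [← Real.Angle.sin_neg, neg_sub]
        rw [this]
        have := hsin
        push_cast at this
        linarith [this]
      have h0 : 0 < ψ.toReal := by
        by_contra hle
        push_neg at hle
        exact absurd hsψ (not_lt.mpr (Real.sin_nonpos_of_nonpos_of_neg_pi_le hle
          (Real.Angle.neg_pi_lt_toReal ψ).le))
      have hπ : ψ.toReal < π := by
        rcases lt_or_eq_of_le (Real.Angle.toReal_le_pi ψ) with h | h
        · exact h
        · rw [h] at hsψ; simp [Real.sin_pi] at hsψ
      refine ⟨ψ.toReal, h0, hπ, ?_⟩
      have : ((((-1:ℤ):ℝ) * ψ.toReal : ℝ) : Real.Angle) = -(ψ.toReal : Real.Angle) := by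
        push_cast; rw [neg_one_mul, Real.Angle.coe_neg]
      rw [this, Real.Angle.coe_toReal, hψ]
      abel
/-- The (unnormalized) bisector direction at the `j`-th vertex. -/
noncomputable def wdir {N : ℕ} (c : Chain N) (j : ℕ) : Pt :=
  ‖cg c (j+1) - cg c j‖⁻¹ • (cg c (j+1) - cg c j) +
    ‖cg c (j-1) - cg c j‖⁻¹ • (cg c (j-1) - cg c j)

lemma dot_hat_pos {u v : Pt} (hu : u ≠ 0) (hv : v ≠ 0)
    (hw : ‖u‖⁻¹ • u + ‖v‖⁻¹ • v ≠ 0) : 0 < dot u (‖u‖⁻¹ • u + ‖v‖⁻¹ • v) := by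
  set w : Pt := ‖u‖⁻¹ • u + ‖v‖⁻¹ • v with hwdef
  have h1 : ‖‖u‖⁻¹ • u‖ = 1 := norm_smul_inv_norm hu
  have h2 : ‖‖v‖⁻¹ • v‖ = 1 := norm_smul_inv_norm hv
  have hw2 : ‖w‖ ^ 2 = 2 + 2 * (inner ℝ (‖u‖⁻¹ • u) (‖v‖⁻¹ • v) : ℝ) := by
    rw [hwdef, norm_add_sq_real, h1, h2]; ring
  have hwpos : 0 < ‖w‖ ^ 2 := pow_pos (norm_pos_of_ne hw) 2
  have hdot : dot u w = ‖u‖ * (1 + (inner ℝ (‖u‖⁻¹ • u) (‖v‖⁻¹ • v) : ℝ)) := by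
    rw [dot_eq_inner]
    have hu' : u = ‖u‖ • (‖u‖⁻¹ • u) := (smul_inv_smul₀ (norm_pos_of_ne hu).ne' u).symm
    calc (inner ℝ u w : ℝ) = inner ℝ (‖u‖ • (‖u‖⁻¹ • u)) w := by rw [← hu']
    _ = ‖u‖ * inner ℝ (‖u‖⁻¹ • u) w := real_inner_smul_left _ _ _
    _ = ‖u‖ * ((inner ℝ (‖u‖⁻¹ • u) (‖u‖⁻¹ • u) : ℝ) + inner ℝ (‖u‖⁻¹ • u) (‖v‖⁻¹ • v)) := by
        rw [hwdef, inner_add_right]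
    _ = _ := by rw [real_inner_self_eq_norm_sq, h1]; ring
  rw [hdot]
  have : (0:ℝ) < 1 + (inner ℝ (‖u‖⁻¹ • u) (‖v‖⁻¹ • v) : ℝ) := by nlinarith
  exact mul_pos (norm_pos_of_ne hu) this

lemma LO_ne {N : ℕ} {c : Chain N} (hc : c ∈ LO N) {j : ℕ} (h1 : 1 ≤ j) (h2 : j ≤ N) :
    cg c (j+1) - cg c j ≠ 0 ∧ cg c (j-1) - cg c j ≠ 0 := by
  obtain ⟨hobs, hgra⟩ := hc
  have h01 : cg c 0 ≠ cg c 1 := fun h => hobs (Or.inl h)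
  constructor
  · rw [sub_ne_zero]
    intro heq
    apply hobs
    refine Or.inr ⟨j - 1, j + 1, by omega, by omega, by omega, by omega, by omega, ?_⟩
    rcases Nat.eq_or_lt_of_le h1 with h | h
    · -- j = 1
      have hj : j = 1 := h.symm
      subst hj
      rw [ray, if_pos rfl]
      exact ⟨heq ▸ right_mem_segment ℝ _ _, by simpa [heq] using (Ne.symm h01)⟩
    · -- j ≥ 2
      rw [ray, if_neg (by omega)]
      have : j - 1 + 1 = j := by omega
      rw [this, heq]
      exact right_mem_segment ℝ _ _
  · rw [sub_ne_zero]
    intro heq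
    rcases Nat.eq_or_lt_of_le h1 with h | h
    · exact hobs (Or.inl (by simpa [← h] using heq))
    · apply hobs
      refine Or.inr ⟨j, j - 1, h2, by omega, by omega, by omega, by omega, ?_⟩
      rw [ray, if_neg (by omega), heq]
      exact left_mem_segment ℝ _ _

lemma wdir_ne {N : ℕ} {c : Chain N} (hc : c ∈ LO N) {j : ℕ} (h1 : 1 ≤ j) (h2 : j ≤ N) :
    wdir c j ≠ 0 := by
  obtain ⟨hu, hv⟩ := LO_ne hc h1 h2
  set u : Pt := cg c (j+1) - cg c j with hudef
  set v : Pt := cg c (j-1) - cg c j with hvdef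
  intro hw
  apply hc.2
  refine ⟨j, h1, h2, ?_⟩
  set a := ‖u‖ with hadef
  set b := ‖v‖ with hbdef
  have ha : 0 < a := norm_pos_of_ne hu
  have hb : 0 < b := norm_pos_of_ne hv
  have hab : 0 < a + b := by linarith
  have h0 : b • u + a • v = 0 := by
    have := congrArg (fun z : Pt => (a * b) • z) hw
    simp only [smul_zero] at this
    rw [wdir] at this
    rw [← hudef, ← hvdef, ← hadef, ← hbdef, smul_add, smul_smul, smul_smul] at this
    rw [show a * b * a⁻¹ = b by field_simp, show a * b * b⁻¹ = a by field_simp] at this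
    exact this
  refine ⟨a / (a + b), b / (a + b), by positivity, by positivity, by field_simp, ?_⟩
  have hc1 : cg c (j-1) = cg c j + v := by rw [hvdef]; abel
  have hc2 : cg c (j+1) = cg c j + u := by rw [hudef]; abel
  rw [hc1, hc2]
  have e1 : (a/(a+b)) • (cg c j + v) + (b/(a+b)) • (cg c j + u)
      = (a/(a+b) + b/(a+b)) • cg c j + (a+b)⁻¹ • (b • u + a • v) := by
    rw [smul_add, smul_add, smul_add, smul_smul, smul_smul, add_smul]
    rw [show (a+b)⁻¹ * b = b/(a+b) by rw [div_eq_inv_mul], show (a+b)⁻¹ * a = a/(a+b) by rw [div_eq_inv_mul]]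
    abel
  rw [e1, h0, smul_zero, add_zero, show a/(a+b) + b/(a+b) = 1 by field_simp, one_smul]

lemma dot_wdir_pos {N : ℕ} {c : Chain N} (hc : c ∈ LO N) {j : ℕ} (h1 : 1 ≤ j) (h2 : j ≤ N) :
    0 < dot (cg c (j+1) - cg c j) (wdir c j) ∧ 0 < dot (cg c (j-1) - cg c j) (wdir c j) := by
  obtain ⟨hu, hv⟩ := LO_ne hc h1 h2
  have hw := wdir_ne hc h1 h2
  rw [wdir] at hw ⊢
  refine ⟨dot_hat_pos hu hv hw, ?_⟩
  rw [add_comm] at hw ⊢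
  exact dot_hat_pos hv hu hw
lemma dot_neg_left (x y : Pt) : dot (-x) y = -(dot x y) := by
  simp [dot]; ring

lemma neg_one_pow_cases (j : ℕ) : ((-1:ℤ))^j = 1 ∨ ((-1:ℤ))^j = -1 := by
  rcases Nat.even_or_odd j with h | h
  · exact Or.inl h.neg_one_pow
  · exact Or.inr h.neg_one_pow

lemma sign_lemma {N : ℕ} {L : RChain N} (hL : L ∈ LR N) {j : ℕ} (h1 : 1 ≤ j) (h2 : j ≤ N) :
    0 < ((if θg L.2 j ∈ APlus L.1 j then (1:ℝ) else -1) * (-1)^j) *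
        dot (cg L.1 (j+1) - cg L.1 j) (nvec (θg L.2 j)) ∧
    0 < ((if θg L.2 j ∈ APlus L.1 j then (1:ℝ) else -1) * (-1)^j) *
        dot (cg L.1 (j-1) - cg L.1 j) (nvec (θg L.2 j)) := by
  obtain ⟨hLO, hrefl⟩ := hL
  obtain ⟨hu, hv⟩ := LO_ne hLO h1 h2
  have hprod := hrefl j h1 h2
  set n := nvec (θg L.2 j) with hn
  set du := dot (cg L.1 (j+1) - cg L.1 j) n with hdu
  set dv := dot (cg L.1 (j-1) - cg L.1 j) n with hdv
  have hx1 : cg L.1 j - cg L.1 (j-1) ≠ 0 := sub_ne_zero.mpr (sub_ne_zero.mp hv).symm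
  have hx2 : cg L.1 j - cg L.1 (j+1) ≠ 0 := sub_ne_zero.mpr (sub_ne_zero.mp hu).symm
  have hd1 : dot (cg L.1 j - cg L.1 (j-1)) n = -dv := by
    rw [← neg_sub (cg L.1 (j-1)) (cg L.1 j), dot_neg_left, hdv]
  have hd2 : dot (cg L.1 j - cg L.1 (j+1)) n = -du := by
    rw [← neg_sub (cg L.1 (j+1)) (cg L.1 j), dot_neg_left, hdu]
  have hεZ := neg_one_pow_cases j
  have hAP : θg L.2 j ∈ APlus L.1 j ↔
      (0 < (((-1:ℤ)^j : ℤ) : ℝ) * dv ∧ 0 < (((-1:ℤ)^j : ℤ) : ℝ) * du) := by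
    rw [APlus, Set.mem_inter_iff, arc_iff hx1 hεZ, arc_iff hx2 hεZ, hd1, hd2]
    simp only [mul_neg, neg_lt_zero]
  have hcast : (((-1:ℤ)^j : ℤ) : ℝ) = (-1:ℝ)^j := by push_cast; ring
  rw [hcast] at hAP
  have he : ((-1:ℝ)^j) = 1 ∨ ((-1:ℝ)^j) = -1 := by
    rcases neg_one_pow_cases j with h | h
    · left; rw [← hcast, h]; norm_num
    · right; rw [← hcast, h]; norm_num
  by_cases hm : θg L.2 j ∈ APlus L.1 j
  · rw [if_pos hm, one_mul]
    obtain ⟨hdv', hdu'⟩ := hAP.mp hm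
    exact ⟨hdu', hdv'⟩
  · rw [if_neg hm]
    have h' : ¬ (0 < (-1:ℝ)^j * dv ∧ 0 < (-1:ℝ)^j * du) := fun hh => hm (hAP.mpr hh)
    rcases mul_pos_iff.mp hprod with ⟨ha, hb⟩ | ⟨ha, hb⟩ <;>
      rcases he with he1 | he1 <;> rw [he1] at h' ⊢
    all_goals first
      | exact absurd ⟨by linarith, by linarith⟩ h'
      | constructor <;> nlinarith
/-- Canonical angle assignment with signs `σ`. -/
noncomputable def thetaOf {N : ℕ} (σ : Fin N → ℝ) (c : Chain N) : Fin N → Real.Angle :=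
  fun j0 => vecToAngle (σ j0 • wdir c (j0.1 + 1))

lemma θg_apply {N : ℕ} (f : Fin N → Real.Angle) {j : ℕ} (h : j - 1 < N) :
    θg f j = f ⟨j - 1, h⟩ := dif_pos h

lemma mkc_ne {x : Pt} (hx : x ≠ 0) : (⟨x 1, -(x 0)⟩ : ℂ) ≠ 0 := by
  simp only [ne_eq, Complex.ext_iff, Complex.zero_re, Complex.zero_im]
  rintro ⟨h1, h0⟩
  apply hx
  have h0' : x 0 = 0 := by linarith
  ext i; fin_cases i <;> simp_all

lemma continuousAt_vecToAngle {x : Pt} (hx : x ≠ 0) : ContinuousAt vecToAngle x := by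
  have h1 : Continuous (fun y : Pt => (⟨y 1, -(y 0)⟩ : ℂ)) := by
    have e : (fun y : Pt => (⟨y 1, -(y 0)⟩ : ℂ))
        = fun y : Pt => ((y 1 : ℝ) : ℂ) + ((-(y 0) : ℝ) : ℂ) * Complex.I := by
      funext y; rw [Complex.mk_eq_add_mul_I]
    rw [e]
    have hc0 : Continuous (fun y : Pt => y 0) := PiLp.continuous_apply _ _ _
    have hc1 : Continuous (fun y : Pt => y 1) := PiLp.continuous_apply _ _ _
    exact (Complex.continuous_ofReal.comp hc1).add
      ((Complex.continuous_ofReal.comp hc0.neg).mul continuous_const)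
  have he : vecToAngle = (fun z : ℂ => (Complex.arg z : Real.Angle)) ∘ (fun y : Pt => (⟨y 1, -(y 0)⟩ : ℂ)) := by
    funext y; rfl
  rw [he]
  apply ContinuousAt.comp
  · exact Complex.continuousAt_arg_coe_angle (mkc_ne hx)
  · exact h1.continuousAt

lemma continuous_cg {N : ℕ} {i : ℕ} (h : i < N + 2) :
    Continuous (fun c : Chain N => cg c i) := by
  have e : (fun c : Chain N => cg c i) = fun c : Chain N => c ⟨i, h⟩ := by
    funext c; rw [cg, dif_pos h]
  rw [e]
  exact continuous_apply _

lemma continuousAt_wdir {N : ℕ} {c : Chain N} (hc : c ∈ LO N) {j : ℕ} (h1 : 1 ≤ j) (h2 : j ≤ N) :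
    ContinuousAt (fun c : Chain N => wdir c j) c := by
  obtain ⟨hu, hv⟩ := LO_ne hc h1 h2
  have hcu : Continuous (fun c : Chain N => cg c (j+1) - cg c j) :=
    (continuous_cg (by omega)).sub (continuous_cg (by omega))
  have hcv : Continuous (fun c : Chain N => cg c (j-1) - cg c j) :=
    (continuous_cg (by omega)).sub (continuous_cg (by omega))
  have hnu : ContinuousAt (fun c : Chain N => ‖cg c (j+1) - cg c j‖⁻¹) c :=
    hcu.norm.continuousAt.inv₀ (norm_pos_of_ne hu).ne'
  have hnv : ContinuousAt (fun c : Chain N => ‖cg c (j-1) - cg c j‖⁻¹) c :=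
    hcv.norm.continuousAt.inv₀ (norm_pos_of_ne hv).ne'
  exact ((hnu.smul hcu.continuousAt).add (hnv.smul hcv.continuousAt))

lemma dot_zero_right (u : Pt) : dot u 0 = 0 := by simp [dot]

/-- Reflexivity of the canonical angle assignment. -/
lemma isReflexive_thetaOf {N : ℕ} (σ : Fin N → ℝ) (hσ : ∀ j0, σ j0 ≠ 0)
    {c : Chain N} (hc : c ∈ LO N) : IsReflexive c (thetaOf σ c) := by
  intro j h1 h2
  have hjN : j - 1 < N := by omega
  have hj : j - 1 + 1 = j := by omega
  rw [θg_apply _ hjN]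
  show 0 < dot _ (nvec (thetaOf σ c ⟨j-1, hjN⟩)) * dot _ (nvec (thetaOf σ c ⟨j-1, hjN⟩))
  rw [thetaOf]
  simp only [hj]
  set j0 : Fin N := ⟨j - 1, hjN⟩
  have hw : wdir c j ≠ 0 := wdir_ne hc h1 h2
  have hx : σ j0 • wdir c j ≠ 0 := smul_ne_zero (hσ j0) hw
  rw [nvec_vecToAngle hx]
  obtain ⟨hdu, hdv⟩ := dot_wdir_pos hc h1 h2
  have hk : 0 < ‖σ j0 • wdir c j‖⁻¹ := by
    rw [inv_pos]; exact norm_pos_of_ne hx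
  rw [dot_smul_right, dot_smul_right, dot_smul_right, dot_smul_right]
  have hσ2 : 0 < σ j0 * σ j0 := mul_self_pos.mpr (hσ j0)
  nlinarith [mul_pos hdu hdv, mul_pos hk hk, mul_pos hσ2 (mul_pos hdu hdv)]

lemma LR_mem {N : ℕ} {c : Chain N} {f : Fin N → Real.Angle} (hc : c ∈ LO N)
    (hf : IsReflexive c f) : (c, f) ∈ LR N := ⟨hc, hf⟩
lemma θg_succ {N : ℕ} (f : Fin N → Real.Angle) (j0 : Fin N) : θg f (j0.1 + 1) = f j0 := by
  rw [θg_apply f (by omega : j0.1 + 1 - 1 < N)]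
  congr 1

lemma join_to_theta {N : ℕ} (σ : Fin N → ℝ) (hσ : ∀ j0, σ j0 ≠ 0)
    {M : RChain N} (hM : M ∈ LR N)
    (hsign : ∀ j0 : Fin N, 0 < σ j0 *
      dot (cg M.1 (j0.1 + 1 + 1) - cg M.1 (j0.1 + 1)) (nvec (θg M.2 (j0.1 + 1)))) :
    JoinedIn (LR N) M (M.1, thetaOf σ M.1) := by
  obtain ⟨hLO, hrefl⟩ := hM
  set n : ℝ → Fin N → Pt := fun s j0 =>
    (1 - s) • nvec (θg M.2 (j0.1 + 1)) + s • (σ j0 • wdir M.1 (j0.1 + 1)) with hn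
  have key : ∀ (s : ℝ), 0 ≤ s → s ≤ 1 → ∀ j0 : Fin N,
      0 < σ j0 * dot (cg M.1 (j0.1+1+1) - cg M.1 (j0.1+1)) (n s j0) ∧
      0 < σ j0 * dot (cg M.1 (j0.1+1-1) - cg M.1 (j0.1+1)) (n s j0) := by
    intro s hs0 hs1 j0
    have h1 : 1 ≤ j0.1 + 1 := by omega
    have h2 : j0.1 + 1 ≤ N := j0.2
    obtain ⟨hdu, hdv⟩ := dot_wdir_pos hLO h1 h2
    have hprod := hrefl (j0.1+1) h1 h2
    have ha0 := hsign j0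
    have hσ2 : 0 < σ j0 * σ j0 := mul_self_pos.mpr (hσ j0)
    have hb0 : 0 < σ j0 * dot (cg M.1 (j0.1+1-1) - cg M.1 (j0.1+1)) (nvec (θg M.2 (j0.1+1))) := by
      nlinarith [hprod, ha0, mul_pos hσ2 hprod]
    have ha1 : 0 < σ j0 * dot (cg M.1 (j0.1+1+1) - cg M.1 (j0.1+1)) (σ j0 • wdir M.1 (j0.1+1)) := by
      rw [dot_smul_right]; nlinarith [hdu, hσ2]
    have hb1 : 0 < σ j0 * dot (cg M.1 (j0.1+1-1) - cg M.1 (j0.1+1)) (σ j0 • wdir M.1 (j0.1+1)) := by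
      rw [dot_smul_right]; nlinarith [hdv, hσ2]
    have hlin : ∀ (A0 A1 : ℝ), 0 < A0 → 0 < A1 → 0 < (1-s)*A0 + s*A1 := by
      intro A0 A1 hA0 hA1
      rcases eq_or_lt_of_le hs0 with h | h
      · rw [← h]; simpa using hA0
      · nlinarith [mul_nonneg (sub_nonneg.mpr hs1) hA0.le, mul_pos h hA1]
    constructor
    · have e : σ j0 * dot (cg M.1 (j0.1+1+1) - cg M.1 (j0.1+1)) (n s j0)
          = (1-s) * (σ j0 * dot (cg M.1 (j0.1+1+1) - cg M.1 (j0.1+1)) (nvec (θg M.2 (j0.1+1))))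
            + s * (σ j0 * dot (cg M.1 (j0.1+1+1) - cg M.1 (j0.1+1)) (σ j0 • wdir M.1 (j0.1+1))) := by
        simp only [hn]
        rw [dot_add_right, dot_smul_right, dot_smul_right]
        ring
      rw [e]; exact hlin _ _ ha0 ha1
    · have e : σ j0 * dot (cg M.1 (j0.1+1-1) - cg M.1 (j0.1+1)) (n s j0)
          = (1-s) * (σ j0 * dot (cg M.1 (j0.1+1-1) - cg M.1 (j0.1+1)) (nvec (θg M.2 (j0.1+1))))
            + s * (σ j0 * dot (cg M.1 (j0.1+1-1) - cg M.1 (j0.1+1)) (σ j0 • wdir M.1 (j0.1+1))) := by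
        simp only [hn]
        rw [dot_add_right, dot_smul_right, dot_smul_right]
        ring
      rw [e]; exact hlin _ _ hb0 hb1
  have hne : ∀ (s : ℝ), 0 ≤ s → s ≤ 1 → ∀ j0 : Fin N, n s j0 ≠ 0 := by
    intro s hs0 hs1 j0 h0
    have := (key s hs0 hs1 j0).1
    rw [h0, dot_zero_right, mul_zero] at this
    exact lt_irrefl 0 this
  refine ⟨⟨⟨fun t => (M.1, fun j0 => vecToAngle (n (t:ℝ) j0)), ?_⟩, ?_, ?_⟩, ?_⟩
  · apply Continuous.prodMk continuous_const
    apply continuous_pi; intro j0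
    apply continuous_iff_continuousAt.mpr; intro t
    have hcn : Continuous (fun t : unitInterval => n (t:ℝ) j0) := by
      simp only [hn]
      exact ((continuous_const.sub continuous_subtype_val).smul continuous_const).add
        (continuous_subtype_val.smul continuous_const)
    show ContinuousAt (vecToAngle ∘ (fun t : unitInterval => n (t:ℝ) j0)) t
    exact ContinuousAt.comp (continuousAt_vecToAngle (hne _ t.2.1 t.2.2 j0)) hcn.continuousAt
  · show (M.1, fun j0 => vecToAngle (n ((0:unitInterval):ℝ) j0)) = M
    have e : (fun j0 => vecToAngle (n ((0:unitInterval):ℝ) j0)) = M.2 := by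
      funext j0
      simp only [hn, Set.Icc.coe_zero, sub_zero, one_smul, zero_smul, add_zero]
      rw [θg_succ, vecToAngle_nvec]
    rw [e]
  · show (M.1, fun j0 => vecToAngle (n ((1:unitInterval):ℝ) j0)) = (M.1, thetaOf σ M.1)
    have e : (fun j0 => vecToAngle (n ((1:unitInterval):ℝ) j0)) = thetaOf σ M.1 := by
      funext j0
      simp only [hn, Set.Icc.coe_one, sub_self, zero_smul, one_smul, zero_add]
      rfl
    rw [e]
  · intro t
    show (M.1, fun j0 => vecToAngle (n (t:ℝ) j0)) ∈ LR N
    refine ⟨hLO, ?_⟩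
    intro j h1 h2
    have hjN : j - 1 < N := by omega
    have hj : j - 1 + 1 = j := by omega
    rw [θg_apply _ hjN]
    show 0 < dot _ (nvec (vecToAngle (n (t:ℝ) ⟨j-1, hjN⟩))) * dot _ (nvec (vecToAngle (n (t:ℝ) ⟨j-1, hjN⟩)))
    have hkey := key (t:ℝ) t.2.1 t.2.2 ⟨j-1, hjN⟩
    simp only [hj] at hkey
    have hne' : n (t:ℝ) ⟨j-1, hjN⟩ ≠ 0 := hne _ t.2.1 t.2.2 _
    rw [nvec_vecToAngle hne', dot_smul_right, dot_smul_right]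
    obtain ⟨hU, hV⟩ := hkey
    have hU' : 0 < σ ⟨j-1, hjN⟩ * dot (cg M.1 (j+1) - cg M.1 j) (n (t:ℝ) ⟨j-1, hjN⟩) := by
      convert hU using 4 <;> omega
    have hV' : 0 < σ ⟨j-1, hjN⟩ * dot (cg M.1 (j-1) - cg M.1 j) (n (t:ℝ) ⟨j-1, hjN⟩) := by
      convert hV using 4 <;> omega
    have hk : 0 < ‖n (t:ℝ) ⟨j-1, hjN⟩‖⁻¹ := by rw [inv_pos]; exact norm_pos_of_ne hne'
    have hσ2 : 0 < σ ⟨j-1, hjN⟩ * σ ⟨j-1, hjN⟩ := mul_self_pos.mpr (hσ _)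
    nlinarith [mul_pos hU' hV', mul_pos hk hk, mul_pos (mul_pos hk hk) (mul_pos hU' hV'), hσ2]

lemma join_mid {N : ℕ} (σ : Fin N → ℝ) (hσ : ∀ j0, σ j0 ≠ 0) {c c' : Chain N}
    (hpath : JoinedIn (LO N) c c') :
    JoinedIn (LR N) (c, thetaOf σ c) (c', thetaOf σ c') := by
  obtain ⟨γ, hγ⟩ := hpath
  have hcont : Continuous fun t : unitInterval => thetaOf σ (γ t) := by
    apply continuous_pi; intro j0
    apply continuous_iff_continuousAt.mpr; intro t
    have h1 : 1 ≤ j0.1 + 1 := by omega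
    have h2 : j0.1 + 1 ≤ N := j0.2
    have hw : wdir (γ t) (j0.1+1) ≠ 0 := wdir_ne (hγ t) h1 h2
    have hx : σ j0 • wdir (γ t) (j0.1+1) ≠ 0 := smul_ne_zero (hσ j0) hw
    have hin : ContinuousAt (fun t : unitInterval => σ j0 • wdir (γ t) (j0.1+1)) t := by
      refine ContinuousAt.const_smul (g := fun t : unitInterval => wdir (γ t) (j0.1+1)) ?_ (σ j0)
      show ContinuousAt ((fun c => wdir c (j0.1+1)) ∘ γ) t
      exact ContinuousAt.comp (continuousAt_wdir (hγ t) h1 h2) γ.continuous.continuousAt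
    show ContinuousAt (vecToAngle ∘ (fun t : unitInterval => σ j0 • wdir (γ t) (j0.1+1))) t
    exact ContinuousAt.comp (continuousAt_vecToAngle hx) hin
  refine ⟨⟨⟨fun t => (γ t, thetaOf σ (γ t)), γ.continuous.prodMk hcont⟩, ?_, ?_⟩, ?_⟩
  · show (γ 0, thetaOf σ (γ 0)) = (c, thetaOf σ c)
    rw [γ.source]
  · show (γ 1, thetaOf σ (γ 1)) = (c', thetaOf σ c')
    rw [γ.target]
  · exact fun t => ⟨hγ t, isReflexive_thetaOf σ hσ (hγ t)⟩
/-- if the underlying chains are joined in `LO^N` and the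
characteristics agree, then the reflexive chains are joined in `LR^N`. -/
theorem statement5 (N : ℕ) (hN : 1 ≤ N) (L L' : RChain N)
    (hL : L ∈ LR N) (hL' : L' ∈ LR N)
    (hpath : JoinedIn (LO N) L.1 L'.1) (hcar : Car L = Car L') :
    JoinedIn (LR N) L L' := by
  classical
  set σ : Fin N → ℝ := fun j0 => ((Car L j0 : ℤ) : ℝ) * (-1)^(j0.1+1) with hσdef
  have hcarval : ∀ j0 : Fin N, ((Car L j0 : ℤ) : ℝ)
      = (if θg L.2 (j0.1+1) ∈ APlus L.1 (j0.1+1) then (1:ℝ) else -1) := by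
    intro j0
    simp only [Car]
    split_ifs <;> norm_num
  have hcarval' : ∀ j0 : Fin N, ((Car L j0 : ℤ) : ℝ)
      = (if θg L'.2 (j0.1+1) ∈ APlus L'.1 (j0.1+1) then (1:ℝ) else -1) := by
    intro j0
    rw [hcar]
    simp only [Car]
    split_ifs <;> norm_num
  have hσ : ∀ j0 : Fin N, σ j0 ≠ 0 := by
    intro j0
    simp only [hσdef]
    apply mul_ne_zero
    · rw [hcarval j0]; split_ifs <;> norm_num
    · exact pow_ne_zero _ (by norm_num)
  have hsL : ∀ j0 : Fin N, 0 < σ j0 *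
      dot (cg L.1 (j0.1+1+1) - cg L.1 (j0.1+1)) (nvec (θg L.2 (j0.1+1))) := by
    intro j0
    have h := (sign_lemma hL (by omega : 1 ≤ j0.1+1) j0.2).1
    simp only [hσdef]
    rw [hcarval j0]
    exact h
  have hsL' : ∀ j0 : Fin N, 0 < σ j0 *
      dot (cg L'.1 (j0.1+1+1) - cg L'.1 (j0.1+1)) (nvec (θg L'.2 (j0.1+1))) := by
    intro j0
    have h := (sign_lemma hL' (by omega : 1 ≤ j0.1+1) j0.2).1
    simp only [hσdef]
    rw [hcarval' j0]
    exact h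
  exact (join_to_theta σ hσ hL hsL).trans
    ((join_mid σ hσ hpath).trans (join_to_theta σ hσ hL' hsL').symm)
end
end
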